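/- Let K(g) = (1/2)‖Y − g‖² + R(g) be defined on a real inner product space, where R is convex and ‖·‖ is induced by the inner product. If ĝ minimizes K over a convex set 𝒢, then for every g̅ ∈ 𝒢: (1/2)‖ĝ − g*‖² + (1/2)‖ĝ − g̅‖² + R(ĝ) ≤ (1/2)‖g̅ − g*‖² + ⟨ε, ĝ − g̅⟩ + R(g̅), where Y = g* + ε. -/

import Mathlib

/-!
Moving from `ghat` towards `gbar` along the segment stays in `G`, and convexity of `R` bounds
`R` on the segment by its chord; minimality of `ghat` then gives, after dividing by the step
`t` and letting `t → 0`, the variational inequality `⟪Y - ghat, gbar - ghat⟫ ≤ R gbar - R ghat`.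
The claim is this inequality plus a polarization identity with `Y = gstar + ε`.
-/

open Filter Topology

theorem le_of_forall_pos_le_one_le_mul_add {a b c : ℝ}
    (h : ∀ t : ℝ, 0 < t → t ≤ 1 → a ≤ t * c + b) : a ≤ b := by
  have hlim : Tendsto (fun t : ℝ => t * c + b) (𝓝[>] 0) (𝓝 b) := by
    refine ((by fun_prop : Continuous fun t : ℝ => t * c + b).tendsto' 0 b ?_).mono_left
      nhdsWithin_le_nhds
    simp
  refine ge_of_tendsto hlim ?_
  filter_upwards [Ioc_mem_nhdsGT (zero_lt_one' ℝ)] with t ht using h t ht.1 ht.2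

section

variable {H : Type*} [NormedAddCommGroup H] [InnerProductSpace ℝ H]

theorem norm_sub_smul_sq_real (u v : H) (t : ℝ) :
    ‖u - t • v‖ ^ 2 = ‖u‖ ^ 2 - 2 * t * inner ℝ u v + t ^ 2 * ‖v‖ ^ 2 := by
  rw [norm_sub_sq_real, real_inner_smul_right, norm_smul, mul_pow, Real.norm_eq_abs, sq_abs]
  ring

theorem real_inner_le_sub_of_isMinOn {G : Set H} (hG : Convex ℝ G) {R : H → ℝ}
    (hR : ConvexOn ℝ G R) {Y ghat : H} (hmem : ghat ∈ G)
    (hmin : IsMinOn (fun g => ‖Y - g‖ ^ 2 / 2 + R g) G ghat)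
    {gbar : H} (hbar : gbar ∈ G) :
    inner ℝ (Y - ghat) (gbar - ghat) ≤ R gbar - R ghat := by
  refine le_of_forall_pos_le_one_le_mul_add (c := ‖gbar - ghat‖ ^ 2 / 2) fun t ht0 ht1 => ?_
  have hseg : (1 - t) • ghat + t • gbar = ghat + t • (gbar - ghat) := by module
  have hK := isMinOn_iff.1 hmin _ (hG hmem hbar (sub_nonneg.2 ht1) ht0.le (sub_add_cancel 1 t))
  have hRt := hR.2 hmem hbar (sub_nonneg.2 ht1) ht0.le (sub_add_cancel 1 t)
  rw [hseg, smul_eq_mul, smul_eq_mul] at hRt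
  rw [hseg, show Y - (ghat + t • (gbar - ghat)) = (Y - ghat) - t • (gbar - ghat) by abel,
    norm_sub_smul_sq_real] at hK
  have : t * inner ℝ (Y - ghat) (gbar - ghat)
      ≤ t * (t * (‖gbar - ghat‖ ^ 2 / 2) + (R gbar - R ghat)) := by nlinarith
  exact le_of_mul_le_mul_left this ht0

theorem norm_sub_sq_add_norm_sub_sq_eq (x y z e : H) :
    ‖x - z‖ ^ 2 / 2 + ‖x - y‖ ^ 2 / 2
      = ‖y - z‖ ^ 2 / 2 + inner ℝ e (x - y) + inner ℝ (z + e - x) (y - x) := by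
  rw [show x - y = (x - z) - (y - z) by abel, show z + e - x = e - (x - z) by abel,
    show y - x = (y - z) - (x - z) by abel]
  generalize x - z = a
  generalize y - z = b
  simp only [norm_sub_sq_real, inner_sub_left, inner_sub_right, real_inner_self_eq_norm_sq]
  ring

end

theorem stmt0 {H : Type*} [NormedAddCommGroup H] [InnerProductSpace ℝ H]
    (G : Set H) (hG : Convex ℝ G) (R : H → ℝ) (hR : ConvexOn ℝ Set.univ R)
    (Y gstar ε : H) (hY : Y = gstar + ε)
    (ghat : H) (hmem : ghat ∈ G)
    (hmin : ∀ g ∈ G, ‖Y - ghat‖^2 / 2 + R ghat ≤ ‖Y - g‖^2 / 2 + R g)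
    (gbar : H) (hbar : gbar ∈ G) :
    ‖ghat - gstar‖^2 / 2 + ‖ghat - gbar‖^2 / 2 + R ghat
      ≤ ‖gbar - gstar‖^2 / 2 + (inner ℝ ε (ghat - gbar) : ℝ) + R gbar := by
  have hvar := real_inner_le_sub_of_isMinOn hG (hR.subset (Set.subset_univ G) hG) hmem
    (isMinOn_iff.2 hmin) hbar
  rw [norm_sub_sq_add_norm_sub_sq_eq ghat gbar gstar ε, ← hY]
  linarith
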